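/- arXiv:1311.1659 — 5 statements merged into one kernel-verified Lean document; each statement's English description precedes it below -/
import Mathlib

section
/- Let f(z) = z^{m+1}/(m+1) on ℂ and let h be a polynomial. Then the formal higher residue of h equals ∑_{r≥0} (-t)^r (∏_{k=0}^{r-1} (m + k(m+1))) · Res_{z=0}( h(z) dz / z^{r(m+1)+m} ), i.e. the coefficient of t^r is (-1)^r ∏_{k=0}^{r-1}(m+k(m+1)) times the coefficient of z^{r(m+1)+m-1} in h. -/
/-! Each application of `∂_z ∘ z^{-m}` shifts Laurent indices by `m + 1` and multiplies the
coefficient landing in degree `n` by `n + 1`, so `r` of them move the coefficient of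
`z^{n + r(m+1)}` down to degree `n` with the factor `∏_{k<r} (n + 1 + k(m+1))`.
The residue of `z^{-m}` times the result reads degree `n = m - 1`, where the factor becomes
`∏_{k<r} (m + k(m+1))`. -/

/-- Formal Laurent coefficients of a polynomial `h`, indexed by `ℤ`. -/
noncomputable def lcoeff (h : Polynomial ℂ) : ℤ → ℂ :=
  fun n => if 0 ≤ n then h.coeff n.toNat else 0

/-- Multiplication by `z^(-m)` on formal Laurent coefficient functions. -/
def mulZinv (m : ℕ) (g : ℤ → ℂ) : ℤ → ℂ := fun n => g (n + m)

/-- Formal derivative `∂/∂z` on formal Laurent coefficient functions. -/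
def lderiv (g : ℤ → ℂ) : ℤ → ℂ := fun n => ((n + 1 : ℤ) : ℂ) * g (n + 1)

@[simp]
lemma lcoeff_natCast (h : Polynomial ℂ) (n : ℕ) : lcoeff h n = h.coeff n := by
  simp [lcoeff]

lemma iterate_lderiv_comp_mulZinv_apply (m r : ℕ) (g : ℤ → ℂ) (n : ℤ) :
    ((lderiv ∘ mulZinv m)^[r] g) n =
      (∏ k ∈ Finset.range r, ((n : ℂ) + 1 + k * (m + 1))) * g (n + r * (m + 1)) := by
  induction r generalizing g n with
  | zero => simp
  | succ r ih =>
    rw [Function.iterate_succ_apply, ih, Finset.prod_range_succ]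
    simp only [Function.comp_apply, lderiv, mulZinv]
    have hshift : n + r * ((m : ℤ) + 1) + 1 + m = n + ((r + 1 : ℕ) : ℤ) * ((m : ℤ) + 1) := by
      push_cast; ring
    rw [hshift]
    push_cast
    ring

/-- For the `A_m`-singularity `f(z) = z^{m+1}/(m+1)` (so `f' = z^m`), the higher
residue of a polynomial `h`, computed by the iterated formula
`Res^f(h) = ∑_{r≥0} (-t)^r Res_{z=0}((1/f')(∂_z ∘ (1/f'))^r(h) dz)`, equals
`∑_{r≥0} (-t)^r (∏_{k=0}^{r-1}(m+k(m+1))) Res_{z=0}(h dz / z^{r(m+1)+m})`; i.e.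
the coefficient of `t^r` is `(-1)^r ∏_{k=0}^{r-1}(m+k(m+1))` times the
coefficient of `z^{r(m+1)+m-1}` in `h`. -/
theorem higher_residue_Am (m : ℕ) (hm : 1 ≤ m) (h : Polynomial ℂ) :
    (PowerSeries.mk fun r : ℕ =>
        (-1 : ℂ) ^ r * mulZinv m ((lderiv ∘ mulZinv m)^[r] (lcoeff h)) (-1)) =
    (PowerSeries.mk fun r : ℕ =>
        (-1 : ℂ) ^ r * (∏ k ∈ Finset.range r, ((m : ℂ) + k * (m + 1))) *
          h.coeff (r * (m + 1) + m - 1)) := by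
  ext r
  have hdegree : -1 + (m : ℤ) + r * ((m : ℤ) + 1) = ((r * (m + 1) + m - 1 : ℕ) : ℤ) := by
    rw [Nat.cast_sub (hm.trans (Nat.le_add_left m _))]
    push_cast
    ring
  have hfactor : ∀ k : ℕ, (((-1 + m : ℤ) : ℂ) + 1 + k * (m + 1)) = (m : ℂ) + k * (m + 1) := by
    intro k; push_cast; ring
  simp only [PowerSeries.coeff_mk, mulZinv, iterate_lderiv_comp_mulZinv_apply, hfactor]
  rw [hdegree, lcoeff_natCast, mul_assoc]
end

section
/- Define g(σ) = 1 + ∑_{r≥1} (-1)^r σ^{3r} ∏_{j=1}^r (3j-2)^3 / (3r)! and h(σ) = σ + ∑_{r≥1} (-1)^r σ^{3r+1} ∏_{j=1}^r (3j-1)^3 / (3r+1)!. Then both g and h are formal power series solutions of the Picard–Fuchs equation (1+σ^3) ν'' + 3σ^2 ν' + σ ν = 0. -/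
open PowerSeries

/-- The power series `g(σ) = 1 + ∑_{r≥1} (-1)^r σ^{3r} ∏_{j=1}^r (3j-2)^3 / (3r)!`. -/
noncomputable def gSeries : PowerSeries ℂ :=
  PowerSeries.mk fun n =>
    if n % 3 = 0 then
      (-1 : ℂ) ^ (n / 3) * (∏ j ∈ Finset.range (n / 3), ((3 * (j + 1) - 2 : ℕ) : ℂ) ^ 3)
        / (Nat.factorial n : ℂ)
    else 0

/-- The power series `h(σ) = σ + ∑_{r≥1} (-1)^r σ^{3r+1} ∏_{j=1}^r (3j-1)^3 / (3r+1)!`. -/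
noncomputable def hSeries : PowerSeries ℂ :=
  PowerSeries.mk fun n =>
    if n % 3 = 1 then
      (-1 : ℂ) ^ (n / 3) * (∏ j ∈ Finset.range (n / 3), ((3 * (j + 1) - 1 : ℕ) : ℂ) ^ 3)
        / (Nat.factorial n : ℂ)
    else 0

/-!
On `ν = ∑ aₙ σⁿ` the Picard–Fuchs operator has constant term `2 a₂` and `σⁿ⁺¹`-coefficient
`(n+2)(n+3) aₙ₊₃ + (n+1)² aₙ`. So `ν` is a solution as soon as `a₂ = 0` and this three-term
recurrence holds; the recurrence only links indices in the same class mod 3. Written as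
`a_{3r+k} = c_r / (3r+k)!`, it becomes `c_{r+1} = -(3r+k+1)³ c_r`, and the coefficients of `g`
(`k = 0`) and `h` (`k = 1`) are exactly the solutions with `c₀ = 1`.
-/

open Finset Nat

lemma neg_one_pow_mul_prod_pow_three_succ {R : Type*} [CommRing R] (e : ℕ → R) (r : ℕ) :
    (-1) ^ (r + 1) * ∏ j ∈ range (r + 1), e j ^ 3 =
      -e r ^ 3 * ((-1) ^ r * ∏ j ∈ range r, e j ^ 3) := by
  rw [pow_succ, prod_range_succ]
  ring

section PicardFuchs

variable {R : Type*} [CommRing R]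

noncomputable def picardFuchsOp (f : R⟦X⟧) : R⟦X⟧ :=
  (1 + X ^ 3) * d⁄dX R (d⁄dX R f) + 3 * X ^ 2 * d⁄dX R f + X * f

lemma coeff_zero_picardFuchsOp (f : R⟦X⟧) :
    coeff 0 (picardFuchsOp f) = 2 * coeff 2 f := by
  rw [picardFuchsOp, ← map_ofNat C 3]
  simp only [add_mul, one_mul, mul_assoc, map_add, coeff_C_mul, coeff_X_pow_mul',
    coeff_derivative, coeff_zero_X_mul]
  norm_num
  ring

lemma coeff_succ_picardFuchsOp (f : R⟦X⟧) (n : ℕ) :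
    coeff (n + 1) (picardFuchsOp f) =
      (n + 2) * (n + 3) * coeff (n + 3) f + (n + 1) ^ 2 * coeff n f := by
  rw [picardFuchsOp, ← map_ofNat C 3]
  simp only [add_mul, one_mul, mul_assoc, map_add, coeff_C_mul, coeff_X_pow_mul',
    coeff_derivative, coeff_succ_X_mul]
  rcases n with _ | _ | n <;> simp [add_assoc] <;> ring

lemma picardFuchsOp_eq_zero_of_recurrence (f : R⟦X⟧) (h₂ : coeff 2 f = 0)
    (hrec : ∀ n : ℕ,
      ((n : R) + 2) * (n + 3) * coeff (n + 3) f + ((n : R) + 1) ^ 2 * coeff n f = 0) :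
    picardFuchsOp f = 0 := by
  ext (_ | n)
  · rw [coeff_zero_picardFuchsOp, h₂, mul_zero, map_zero]
  · rw [coeff_succ_picardFuchsOp, hrec, map_zero]

end PicardFuchs

section ResidueSeries

variable {K : Type*} [Field K]

noncomputable def residueSeries (k : ℕ) (c : ℕ → K) : K⟦X⟧ :=
  mk fun n => if n % 3 = k then c (n / 3) / n ! else 0

lemma residueSeries_recurrence [CharZero K] (k : ℕ) (c : ℕ → K)
    (hc : ∀ r, c (r + 1) = -((3 * r + k + 1 : ℕ) : K) ^ 3 * c r) (n : ℕ) :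
    ((n : K) + 2) * (n + 3) * coeff (n + 3) (residueSeries k c)
      + ((n : K) + 1) ^ 2 * coeff n (residueSeries k c) = 0 := by
  simp only [residueSeries, coeff_mk, Nat.add_mod_right]
  split_ifs with hn
  · have hdiv : (n + 3) / 3 = n / 3 + 1 := by omega
    have hlin : 3 * (n / 3) + k + 1 = n + 1 := by omega
    have hfact : ((n + 3)! : K) = n ! * ((n + 1) * (n + 2) * (n + 3)) := by
      push_cast [Nat.factorial_succ]; ring
    have h0 : (n ! : K) ≠ 0 := by exact_mod_cast n.factorial_ne_zero
    have h2 : (n : K) + 2 ≠ 0 := by exact_mod_cast (n + 1).succ_ne_zero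
    have h3 : (n : K) + 3 ≠ 0 := by exact_mod_cast (n + 2).succ_ne_zero
    rw [hdiv, hc, hlin, hfact]
    field_simp
    push_cast
    ring
  · simp

lemma picardFuchsOp_residueSeries [CharZero K] {k : ℕ} (hk : k ≠ 2) (c : ℕ → K)
    (hc : ∀ r, c (r + 1) = -((3 * r + k + 1 : ℕ) : K) ^ 3 * c r) :
    picardFuchsOp (residueSeries k c) = 0 := by
  refine picardFuchsOp_eq_zero_of_recurrence _ ?_ (residueSeries_recurrence k c hc)
  simp [residueSeries, Ne.symm hk]

end ResidueSeries

/-- Both `g` and `h` are formal power series solutions of the Picard–Fuchs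
equation `(1+σ^3)ν'' + 3σ^2 ν' + σ ν = 0`. -/
theorem gSeries_hSeries_solve_picard_fuchs :
    (∀ ν : PowerSeries ℂ, ν = gSeries ∨ ν = hSeries →
      (1 + X ^ 3) * derivativeFun (derivativeFun ν) + 3 * X ^ 2 * derivativeFun ν
        + X * ν = 0) := by
  rintro ν (rfl | rfl)
  · refine picardFuchsOp_residueSeries (k := 0) (by decide)
      (fun r => (-1 : ℂ) ^ r * ∏ j ∈ range r, ((3 * (j + 1) - 2 : ℕ) : ℂ) ^ 3) fun r => ?_
    rw [neg_one_pow_mul_prod_pow_three_succ, show 3 * (r + 1) - 2 = 3 * r + 0 + 1 by omega]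
  · refine picardFuchsOp_residueSeries (k := 1) (by decide)
      (fun r => (-1 : ℂ) ^ r * ∏ j ∈ range r, ((3 * (j + 1) - 1 : ℕ) : ℂ) ^ 3) fun r => ?_
    rw [neg_one_pow_mul_prod_pow_three_succ, show 3 * (r + 1) - 1 = 3 * r + 1 + 1 by omega]
end

section
/- Let V be a ℂ((t))-vector space of finite dimension over ℂ((t)), let H_0 ⊂ V be a free ℂ[[t]]-lattice with V = H_0 ⊗_{ℂ[[t]]} ℂ((t)), and let L ⊂ V be a ℂ-subspace with V = H_0 ⊕ L and t^{-1}L ⊆ L. Set B := H_0 ∩ tL. Then H_0 = B[[t]] (i.e. H_0 equals the ℂ[[t]]-span of B), L = t^{-1}B[t^{-1}], and V = B((t)); in particular, the projection B → H_0/tH_0 is an isomorphism of ℂ-vector spaces. -/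
/-!
`B = H₀ ∩ tL` is a complement of `tH₀` in `H₀` (this uses `V = H₀ ⊕ L` and `t⁻¹L ⊆ L`), so
Nakayama's lemma over the local ring `K⟦X⟧`, applied to the finitely generated module `H₀`, gives
`H₀ = B[[t]]`; hence `B` spans `V` over `K((t))`. Splitting Laurent coefficients into power series
and polar parts gives `V = H₀ + t⁻¹B[t⁻¹]`, and since `t⁻¹B[t⁻¹] ⊆ L` and `H₀ ∩ L = 0`, the modular
law forces `L = t⁻¹B[t⁻¹]`.
-/

open HahnSeries Submodule PowerSeries

namespace OppositeFiltration

variable {K : Type*} [Field K] {V : Type*} [AddCommGroup V] [Module (LaurentSeries K) V]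

local notation "τ" => (single (1 : ℤ) (1 : K) : LaurentSeries K)
local notation "σ" => (single (-1 : ℤ) (1 : K) : LaurentSeries K)

theorem single_smul_single_smul (m n : ℤ) (x : V) :
    (single m 1 : LaurentSeries K) • (single n 1 : LaurentSeries K) • x =
      (single (m + n) 1 : LaurentSeries K) • x := by
  rw [smul_smul, single_mul_single, one_mul]

theorem single_neg_smul_single_smul (n : ℤ) (x : V) :
    (single (-n) 1 : LaurentSeries K) • (single n 1 : LaurentSeries K) • x = x := by
  rw [single_smul_single_smul, neg_add_cancel, single_zero_one, one_smul]

theorem single_smul_single_neg_smul (n : ℤ) (x : V) :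
    (single n 1 : LaurentSeries K) • (single (-n) 1 : LaurentSeries K) • x = x := by
  simpa using single_neg_smul_single_smul (K := K) (-n) x

section PowerSeriesScalars

variable [Module K⟦X⟧ V] [IsScalarTower K⟦X⟧ (LaurentSeries K) V]

theorem ofPowerSeries_smul (f : K⟦X⟧) (x : V) : ofPowerSeries ℤ K f • x = f • x := by
  rw [← LaurentSeries.coe_algebraMap, algebraMap_smul]

theorem X_smul (x : V) : (X : K⟦X⟧) • x = τ • x := by
  rw [← ofPowerSeries_smul, ofPowerSeries_X]

theorem single_natCast_smul (n : ℕ) (x : V) :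
    (single (n : ℤ) 1 : LaurentSeries K) • x = (X ^ n : K⟦X⟧) • x := by
  rw [← ofPowerSeries_smul, ofPowerSeries_X_pow]

theorem single_one_smul_mem {H : Submodule K⟦X⟧ V} {x : V} (hx : x ∈ H) : τ • x ∈ H :=
  X_smul (K := K) x ▸ H.smul_mem X hx

theorem fg_of_free [FiniteDimensional (LaurentSeries K) V] (H : Submodule K⟦X⟧ V)
    [Module.Free K⟦X⟧ H] : H.FG := by
  obtain ⟨⟨ι, b⟩⟩ := Module.Free.exists_basis (R := K⟦X⟧) (M := H)
  have hli : LinearIndependent (LaurentSeries K) (H.subtype ∘ b) :=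
    (b.linearIndependent.map' H.subtype H.ker_subtype).localization (LaurentSeries K)
      (Submonoid.powers X)
  have : Finite ι := hli.finite
  exact Module.Finite.iff_fg.mp (Module.Finite.of_basis b)

end PowerSeriesScalars

variable [Module K V]

theorem single_neg_natCast_smul_mem {L : Submodule K V} (hL : ∀ x ∈ L, σ • x ∈ L) (k : ℕ)
    {x : V} (hx : x ∈ L) : (single (-(k : ℤ)) 1 : LaurentSeries K) • x ∈ L := by
  induction k with
  | zero => simpa using hx
  | succ k ih =>
    have := hL _ ih
    rwa [single_smul_single_smul, ← sub_eq_neg_add, ← neg_add', ← Nat.cast_succ] at this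

noncomputable def negPowerSpan (B : Submodule K V) : Submodule K V :=
  span K {x | ∃ (k : ℕ) (b : V), b ∈ B ∧
    x = (single (-(k : ℤ) - 1) 1 : LaurentSeries K) • b}

section LaurentSpan

variable [Module K⟦X⟧ V] [IsScalarTower K K⟦X⟧ V] [IsScalarTower K⟦X⟧ (LaurentSeries K) V]
  {H0 : Submodule K⟦X⟧ V} {B : Submodule K V}

theorem single_neg_smul_smul_mem (hB : B ≤ H0.restrictScalars K) (n : ℕ) (f : K⟦X⟧) {b : V}
    (hb : b ∈ B) :
    (single (-(n : ℤ)) 1 : LaurentSeries K) • f • b ∈ H0.restrictScalars K ⊔ negPowerSpan B := by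
  induction n generalizing f with
  | zero =>
    simpa using (mem_sup_left (H0.smul_mem f (hB hb)) :
      f • b ∈ H0.restrictScalars K ⊔ negPowerSpan B)
  | succ n ih =>
    rw [eq_X_mul_shift_add_const f, add_smul, mul_smul, X_smul, smul_add,
      single_smul_single_smul]
    refine add_mem ?_ (mem_sup_right ?_)
    · convert ih _ using 4
      push_cast
      ring
    · rw [PowerSeries.C_eq_algebraMap, algebraMap_smul]
      exact subset_span ⟨n, _, B.smul_mem _ hb, by rw [Nat.cast_succ, neg_add']⟩

theorem laurent_smul_mem_sup (hB : B ≤ H0.restrictScalars K) (f : LaurentSeries K) {b : V}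
    (hb : b ∈ B) : f • b ∈ H0.restrictScalars K ⊔ negPowerSpan B := by
  rw [← f.single_order_mul_powerSeriesPart, mul_smul, ofPowerSeries_smul]
  obtain ⟨n, hn | hn⟩ := Int.eq_nat_or_neg f.order
  · rw [hn, single_natCast_smul, smul_smul]
    exact mem_sup_left (H0.smul_mem _ (hB hb))
  · rw [hn]
    exact single_neg_smul_smul_mem hB n _ hb

theorem sup_negPowerSpan_eq_top (hB : B ≤ H0.restrictScalars K)
    (hspan : span (LaurentSeries K) (B : Set V) = ⊤) :
    H0.restrictScalars K ⊔ negPowerSpan B = ⊤ := by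
  refine eq_top_iff.mpr fun x _ ↦ ?_
  obtain ⟨n, f, g, rfl⟩ :=
    mem_span_set'.mp (hspan ▸ mem_top : x ∈ span (LaurentSeries K) (B : Set V))
  exact sum_mem fun i _ ↦ laurent_smul_mem_sup hB (f i) (g i).2

end LaurentSpan

variable [IsScalarTower K (LaurentSeries K) V]

variable (K V) in
noncomputable def tMul : V →ₗ[K] V :=
  (LinearMap.lsmul (LaurentSeries K) V τ).restrictScalars K

@[simp]
theorem tMul_apply (x : V) : tMul K V x = τ • x := rfl

variable [Module K⟦X⟧ V] [IsScalarTower K K⟦X⟧ V]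

noncomputable def sectionSpace (H0 : Submodule K⟦X⟧ V) (L : Submodule K V) : Submodule K V :=
  H0.restrictScalars K ⊓ L.map (tMul K V)

variable {H0 : Submodule K⟦X⟧ V} {L : Submodule K V}

theorem sectionSpace_inf_map_tMul (hinf : H0.restrictScalars K ⊓ L = ⊥) :
    sectionSpace H0 L ⊓ (H0.restrictScalars K).map (tMul K V) = ⊥ := by
  rw [eq_bot_iff]
  rintro _ ⟨⟨-, l, hl, rfl⟩, h, hh, heq⟩
  obtain rfl : h = l := by
    simpa only [tMul_apply, single_neg_smul_single_smul] using congrArg (σ • ·) heq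
  have hh0 : h ∈ H0.restrictScalars K ⊓ L := ⟨hh, hl⟩
  rw [hinf, mem_bot] at hh0
  simp [hh0]

theorem negPowerSpan_sectionSpace_le (hL : ∀ x ∈ L, σ • x ∈ L) :
    negPowerSpan (sectionSpace H0 L) ≤ L := by
  refine span_le.mpr ?_
  rintro _ ⟨k, _, ⟨-, l, hl, rfl⟩, rfl⟩
  rw [tMul_apply, single_smul_single_smul, sub_add_cancel]
  exact single_neg_natCast_smul_mem hL k hl

variable [IsScalarTower K⟦X⟧ (LaurentSeries K) V]

theorem sectionSpace_sup_map_tMul (hsup : H0.restrictScalars K ⊔ L = ⊤) :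
    sectionSpace H0 L ⊔ (H0.restrictScalars K).map (tMul K V) = H0.restrictScalars K := by
  refine le_antisymm (sup_le inf_le_left ?_) fun x hx ↦ ?_
  · rintro _ ⟨h, hh, rfl⟩
    exact single_one_smul_mem hh
  obtain ⟨h, hh, l, hl, hsum⟩ := mem_sup.mp (hsup ▸ mem_top : σ • x ∈ H0.restrictScalars K ⊔ L)
  have hx_eq : x = tMul K V l + tMul K V h := by
    rw [add_comm, ← map_add, hsum]
    exact (single_smul_single_neg_smul 1 x).symm
  have htl : tMul K V l ∈ H0 := by
    rw [eq_sub_of_add_eq hx_eq.symm]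
    exact sub_mem hx (single_one_smul_mem hh)
  exact hx_eq ▸ add_mem_sup ⟨htl, l, hl, rfl⟩ ⟨h, hh, rfl⟩

theorem span_sectionSpace (hfg : H0.FG) (hsup : H0.restrictScalars K ⊔ L = ⊤) :
    span K⟦X⟧ (sectionSpace H0 L : Set V) = H0 := by
  refine le_antisymm (span_le.mpr fun _ hx ↦ hx.1) ?_
  refine le_of_le_smul_of_le_jacobson_bot hfg (IsLocalRing.maximalIdeal_le_jacobson _) ?_
  rw [maximalIdeal_eq_span_X, ideal_span_singleton_smul]
  intro x hx
  replace hx : x ∈ H0.restrictScalars K := hx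
  rw [← sectionSpace_sup_map_tMul hsup] at hx
  obtain ⟨b, hb, _, ⟨h, hh, rfl⟩, rfl⟩ := mem_sup.mp hx
  exact add_mem_sup (subset_span hb) ((mem_smul_pointwise_iff_exists _ _ _).mpr ⟨h, hh, X_smul h⟩)

end OppositeFiltration

open OppositeFiltration

/-- Let `V` be a finite-dimensional `ℂ((t))`-vector space, `H₀ ⊂ V` a free
`ℂ[[t]]`-lattice spanning `V` over `ℂ((t))`, and `L ⊂ V` a `ℂ`-subspace with
`V = H₀ ⊕ L` and `t⁻¹L ⊆ L`.  Set `B := H₀ ∩ tL`.  Then `H₀ = B[[t]]` (the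
`ℂ[[t]]`-span of `B`), `V = B((t))` (the `ℂ((t))`-span of `B` is all of `V`),
`L = t⁻¹B[t⁻¹]`, and the projection `B → H₀/tH₀` is an isomorphism (expressed
as `B ⊔ tH₀ = H₀` and `B ⊓ tH₀ = ⊥`). -/
theorem opposite_filtration_structure
    (V : Type*) [AddCommGroup V]
    [Module (LaurentSeries ℂ) V] [FiniteDimensional (LaurentSeries ℂ) V]
    [Module (PowerSeries ℂ) V] [Module ℂ V]
    [IsScalarTower (PowerSeries ℂ) (LaurentSeries ℂ) V]
    [IsScalarTower ℂ (LaurentSeries ℂ) V]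
    [IsScalarTower ℂ (PowerSeries ℂ) V]
    (H0 : Submodule (PowerSeries ℂ) V) [Module.Free (PowerSeries ℂ) H0]
    (hlattice : Submodule.span (LaurentSeries ℂ) (H0 : Set V) = ⊤)
    (L : Submodule ℂ V)
    (hsup : H0.restrictScalars ℂ ⊔ L = ⊤)
    (hinf : H0.restrictScalars ℂ ⊓ L = ⊥)
    (hL : ∀ x ∈ L,
      (HahnSeries.single (-1 : ℤ) (1 : ℂ) : LaurentSeries ℂ) • x ∈ L) :
    let tmul : V →ₗ[ℂ] V :=
      (LinearMap.lsmul (LaurentSeries ℂ) V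
        (HahnSeries.single (1 : ℤ) (1 : ℂ) : LaurentSeries ℂ)).restrictScalars ℂ
    let B : Submodule ℂ V := H0.restrictScalars ℂ ⊓ L.map tmul
    H0 = Submodule.span (PowerSeries ℂ) (B : Set V) ∧
    Submodule.span (LaurentSeries ℂ) (B : Set V) = ⊤ ∧
    L = Submodule.span ℂ {x : V | ∃ (k : ℕ) (b : V), b ∈ B ∧
          x = (HahnSeries.single (-(k : ℤ) - 1) (1 : ℂ) : LaurentSeries ℂ) • b} ∧
    B ⊔ (H0.restrictScalars ℂ).map tmul = H0.restrictScalars ℂ ∧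
    B ⊓ (H0.restrictScalars ℂ).map tmul = ⊥ := by
  intro tmul B
  have hH0 : span (PowerSeries ℂ) (sectionSpace H0 L : Set V) = H0 :=
    span_sectionSpace (fg_of_free H0) hsup
  have hV : span (LaurentSeries ℂ) (sectionSpace H0 L : Set V) = ⊤ := by
    rw [← span_span_of_tower (PowerSeries ℂ), hH0, hlattice]
  have hsup' : H0.restrictScalars ℂ ⊔ negPowerSpan (sectionSpace H0 L) = ⊤ :=
    sup_negPowerSpan_eq_top inf_le_left hV
  have hL_eq : negPowerSpan (sectionSpace H0 L) = L :=
    eq_of_le_of_inf_le_of_sup_le (negPowerSpan_sectionSpace_le hL)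
      (by rw [inf_comm, hinf]; exact bot_le) (by rw [sup_comm, hsup, sup_comm, hsup'])
  exact ⟨hH0.symm, hV, hL_eq.symm, sectionSpace_sup_map_tMul hsup, sectionSpace_inf_map_tMul hinf⟩
end

section
/- Let V = B((t)) for a finite-dimensional ℂ-vector space B, with lattice H_0 = B[[t]] and L = t^{-1}B[t^{-1}], and let K : V × V → ℂ((t)) be a sesquilinear pairing satisfying K(ν(t)s, s') = ν(t)K(s,s'), K(s, ν(t)s') = ν(−t)K(s,s'), and K(H_0, H_0) ⊆ ℂ[[t]]. Then the following are equivalent: (i) ω(L, L) = 0 where ω(a,b) := Res_{t=0} K(a,b)dt; (ii) K(L, L) ⊆ t^{-2}ℂ[t^{-1}]; (iii) K(B, B) ⊆ ℂ. -/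
/-!
Multiplication by `t^k` shifts coefficients, and by the (sesqui)linearity of `K`,
`K(t^k a, t^l a') = (-1)^l t^(k+l) K(a, a')`. Since `t^(-n-1) L ⊆ L` for `n ≥ -1`, the coefficient
of `t^n` in `K(a, a')` is a residue of a pairing on `L`, giving (i) ⇔ (ii). Since `t⁻¹B ⊆ L`, the
coefficient of `t^n` (`n > 0`) in `K(b, b')` is, up to sign, the coefficient of `t^(n-2)` in
`K(t⁻¹b, t⁻¹b')`, while negative coefficients vanish because `B ⊆ H₀`; this gives (ii) ⇒ (iii).
Conversely `L` is spanned by the `t^k B` with `k < 0`, and `K(t^k B, t^l B) ⊆ ℂ t^(k+l)`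
with `k + l ≤ -2`.
-/

/-- The involution `ν(t) ↦ ν(−t)` on Laurent series. -/
noncomputable def lbar (f : LaurentSeries ℂ) : LaurentSeries ℂ :=
  ⟨fun n => (-1 : ℂ) ^ n * f.coeff n,
    f.isPWO_support'.mono (by
      intro n hn
      simp only [Function.mem_support] at hn ⊢
      intro h
      exact hn (by rw [h, mul_zero]))⟩

open HahnSeries

theorem lbar_single (k : ℤ) (c : ℂ) : lbar (single k c) = single k ((-1) ^ k * c) := by
  ext n
  by_cases h : n = k
  · subst h
    simp [lbar]
  · simp [lbar, coeff_single_of_ne h]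

namespace OppositeFiltration

variable {R ι : Type*}

section Vectors

variable [Zero R]

/-- Membership in `L = t⁻¹B[t⁻¹]`. -/
def IsPrincipalPart (a : ι → LaurentSeries R) : Prop :=
  ∀ i, ∀ n : ℤ, 0 ≤ n → (a i).coeff n = 0

/-- Membership in `B`. -/
def IsConstant (b : ι → LaurentSeries R) : Prop :=
  ∀ i, ∀ n : ℤ, n ≠ 0 → (b i).coeff n = 0

end Vectors

section Decomposition

variable [Semiring R]

theorem IsPrincipalPart.single_smul {a : ι → LaurentSeries R} (ha : IsPrincipalPart a)
    {k : ℤ} (hk : k ≤ 0) (c : R) : IsPrincipalPart (single k c • a) := by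
  intro i n hn
  rw [Pi.smul_apply, smul_eq_mul, coeff_single_mul, ha i _ (by omega), mul_zero]

theorem IsConstant.isPrincipalPart_single_smul {b : ι → LaurentSeries R} (hb : IsConstant b)
    {k : ℤ} (hk : k < 0) (c : R) : IsPrincipalPart (single k c • b) := by
  intro i n hn
  rw [Pi.smul_apply, smul_eq_mul, coeff_single_mul, hb i _ (by omega), mul_zero]

theorem IsPrincipalPart.exists_finset [Finite ι] {a : ι → LaurentSeries R}
    (ha : IsPrincipalPart a) :
    ∃ S : Finset ℤ, (∀ k ∈ S, k < 0) ∧ ∀ i, ∀ n ∉ S, (a i).coeff n = 0 := by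
  obtain ⟨N, hN⟩ := Finite.exists_ge fun i => (a i).order
  refine ⟨Finset.Ico N 0, fun k hk => (Finset.mem_Ico.1 hk).2, fun i n hn => ?_⟩
  rcases lt_or_ge n N with hlt | hge
  · exact coeff_eq_zero_of_lt_order (hlt.trans_le (hN i))
  · exact ha i n (by simpa [hge] using hn)

theorem eq_sum_single_smul_C_coeff (a : ι → LaurentSeries R) (S : Finset ℤ)
    (hS : ∀ i, ∀ n ∉ S, (a i).coeff n = 0) :
    a = ∑ k ∈ S, single k (1 : R) • fun i => C ((a i).coeff k) := by
  funext i
  ext n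
  simp only [Finset.sum_apply, Pi.smul_apply, smul_eq_mul, C_apply, single_mul_single, add_zero,
    one_mul, coeff_sum]
  by_cases hn : n ∈ S
  · rw [Finset.sum_eq_single_of_mem n hn fun k _ hk => coeff_single_of_ne hk.symm,
      coeff_single_same]
  · rw [hS i n hn,
      Finset.sum_eq_zero fun k hk => coeff_single_of_ne (ne_of_mem_of_not_mem hk hn).symm]

theorem IsPrincipalPart.exists_eq_sum_single_smul [Finite ι] {a : ι → LaurentSeries R}
    (ha : IsPrincipalPart a) :
    ∃ (S : Finset ℤ) (b : ℤ → ι → LaurentSeries R),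
      (∀ k ∈ S, k < 0 ∧ IsConstant (b k)) ∧ a = ∑ k ∈ S, single k (1 : R) • b k := by
  obtain ⟨S, hneg, hS⟩ := ha.exists_finset
  refine ⟨S, fun k i => C ((a i).coeff k), fun k hk => ⟨hneg k hk, fun i n hn => ?_⟩,
    eq_sum_single_smul_C_coeff a S hS⟩
  simp [C_apply, coeff_single_of_ne hn]

end Decomposition

section Pairing

variable (K : (ι → LaurentSeries ℂ) →ₗ[ℂ] (ι → LaurentSeries ℂ) →ₗ[ℂ] LaurentSeries ℂ)

theorem coeff_pairing_single_smul_left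
    (hKl : ∀ (ν : LaurentSeries ℂ) (s s' : ι → LaurentSeries ℂ), K (ν • s) s' = ν * K s s')
    (k n : ℤ) (s s' : ι → LaurentSeries ℂ) :
    (K (single k (1 : ℂ) • s) s').coeff n = (K s s').coeff (n - k) := by
  rw [hKl, coeff_single_mul, one_mul]

theorem coeff_pairing_single_smul_single_smul
    (hKl : ∀ (ν : LaurentSeries ℂ) (s s' : ι → LaurentSeries ℂ), K (ν • s) s' = ν * K s s')
    (hKr : ∀ (ν : LaurentSeries ℂ) (s s' : ι → LaurentSeries ℂ),
      K s (ν • s') = lbar ν * K s s')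
    (k l n : ℤ) (s s' : ι → LaurentSeries ℂ) :
    (K (single k (1 : ℂ) • s) (single l (1 : ℂ) • s')).coeff n =
      (-1) ^ l * (K s s').coeff (n - k - l) := by
  rw [hKl, hKr, lbar_single, coeff_single_mul, coeff_single_mul, one_mul, mul_one]

/-- Condition (i): `ω(L, L) = 0`. -/
def ResidueVanishesOnPrincipalParts : Prop :=
  ∀ a a', IsPrincipalPart a → IsPrincipalPart a' → (K a a').coeff (-1) = 0

/-- Condition (ii): `K(L, L) ⊆ t⁻²ℂ[t⁻¹]`. -/
def PairingVanishesFromNegOneOnPrincipalParts : Prop :=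
  ∀ a a', IsPrincipalPart a → IsPrincipalPart a' → ∀ n : ℤ, -1 ≤ n → (K a a').coeff n = 0

/-- Condition (iii): `K(B, B) ⊆ ℂ`. -/
def PairingIsConstantOnConstants : Prop :=
  ∀ b b', IsConstant b → IsConstant b' → ∀ n : ℤ, n ≠ 0 → (K b b').coeff n = 0

theorem residueVanishesOnPrincipalParts_iff
    (hKl : ∀ (ν : LaurentSeries ℂ) (s s' : ι → LaurentSeries ℂ), K (ν • s) s' = ν * K s s') :
    ResidueVanishesOnPrincipalParts K ↔ PairingVanishesFromNegOneOnPrincipalParts K := by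
  refine ⟨fun h a a' ha ha' n hn => ?_, fun h a a' ha ha' => h a a' ha ha' (-1) le_rfl⟩
  have := h _ a' (ha.single_smul (k := -n - 1) (by omega) 1) ha'
  rwa [coeff_pairing_single_smul_left K hKl, show -1 - (-n - 1) = n by ring] at this

theorem PairingVanishesFromNegOneOnPrincipalParts.pairingIsConstantOnConstants
    (hKl : ∀ (ν : LaurentSeries ℂ) (s s' : ι → LaurentSeries ℂ), K (ν • s) s' = ν * K s s')
    (hKr : ∀ (ν : LaurentSeries ℂ) (s s' : ι → LaurentSeries ℂ),
      K s (ν • s') = lbar ν * K s s')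
    (hH0 : ∀ s s' : ι → LaurentSeries ℂ,
      (∀ i, ∀ n : ℤ, n < 0 → (s i).coeff n = 0) →
      (∀ i, ∀ n : ℤ, n < 0 → (s' i).coeff n = 0) →
      ∀ n : ℤ, n < 0 → (K s s').coeff n = 0)
    (h : PairingVanishesFromNegOneOnPrincipalParts K) : PairingIsConstantOnConstants K := by
  intro b b' hb hb' n hn
  rcases hn.lt_or_gt with hneg | hpos
  · exact hH0 b b' (fun i m hm => hb i m hm.ne) (fun i m hm => hb' i m hm.ne) n hneg
  · have := h _ _ (hb.isPrincipalPart_single_smul (k := -1) (by norm_num) 1)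
      (hb'.isPrincipalPart_single_smul (k := -1) (by norm_num) 1) (n - 2) (by omega)
    rw [coeff_pairing_single_smul_single_smul K hKl hKr, show n - 2 - -1 - -1 = n by ring] at this
    simpa using this

theorem PairingIsConstantOnConstants.pairingVanishesFromNegOneOnPrincipalParts [Finite ι]
    (hKl : ∀ (ν : LaurentSeries ℂ) (s s' : ι → LaurentSeries ℂ), K (ν • s) s' = ν * K s s')
    (hKr : ∀ (ν : LaurentSeries ℂ) (s s' : ι → LaurentSeries ℂ),
      K s (ν • s') = lbar ν * K s s')
    (h : PairingIsConstantOnConstants K) : PairingVanishesFromNegOneOnPrincipalParts K := by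
  intro a a' ha ha' n hn
  obtain ⟨S, b, hb, rfl⟩ := ha.exists_eq_sum_single_smul
  obtain ⟨S', b', hb', rfl⟩ := ha'.exists_eq_sum_single_smul
  simp only [map_sum, LinearMap.sum_apply, coeff_sum,
    coeff_pairing_single_smul_single_smul K hKl hKr]
  refine Finset.sum_eq_zero fun l hl => Finset.sum_eq_zero fun k hk => ?_
  obtain ⟨hk, hbk⟩ := hb k hk
  obtain ⟨hl, hbl⟩ := hb' l hl
  rw [h _ _ hbk hbl _ (by omega), mul_zero]

end Pairing

end OppositeFiltration

/-- Let `V = B((t))` for `B = ℂ^d`, with lattice `H₀ = B[[t]]` and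
`L = t⁻¹B[t⁻¹]`, and let `K` be a sesquilinear pairing with values in `ℂ((t))`
satisfying `K(ν(t)s, s') = ν(t)K(s,s')`, `K(s, ν(t)s') = ν(−t)K(s,s')` and
`K(H₀, H₀) ⊆ ℂ[[t]]`.  Then the following are equivalent:
(i) `ω(L,L) = 0` where `ω(a,b) = Res_{t=0} K(a,b)dt`;
(ii) `K(L,L) ⊆ t⁻²ℂ[t⁻¹]`;
(iii) `K(B,B) ⊆ ℂ`. -/
theorem opposite_filtration_pairing_tfae (d : ℕ)
    (K : (Fin d → LaurentSeries ℂ) →ₗ[ℂ] (Fin d → LaurentSeries ℂ) →ₗ[ℂ]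
      LaurentSeries ℂ)
    (hKl : ∀ (ν : LaurentSeries ℂ) (s s' : Fin d → LaurentSeries ℂ),
      K (ν • s) s' = ν * K s s')
    (hKr : ∀ (ν : LaurentSeries ℂ) (s s' : Fin d → LaurentSeries ℂ),
      K s (ν • s') = lbar ν * K s s')
    (hH0 : ∀ s s' : Fin d → LaurentSeries ℂ,
      (∀ i, ∀ n : ℤ, n < 0 → (s i).coeff n = 0) →
      (∀ i, ∀ n : ℤ, n < 0 → (s' i).coeff n = 0) →
      ∀ n : ℤ, n < 0 → (K s s').coeff n = 0) :
    ((∀ a a' : Fin d → LaurentSeries ℂ,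
        (∀ i, ∀ n : ℤ, 0 ≤ n → (a i).coeff n = 0) →
        (∀ i, ∀ n : ℤ, 0 ≤ n → (a' i).coeff n = 0) →
        (K a a').coeff (-1) = 0) ↔
     (∀ a a' : Fin d → LaurentSeries ℂ,
        (∀ i, ∀ n : ℤ, 0 ≤ n → (a i).coeff n = 0) →
        (∀ i, ∀ n : ℤ, 0 ≤ n → (a' i).coeff n = 0) →
        ∀ n : ℤ, -1 ≤ n → (K a a').coeff n = 0)) ∧
    ((∀ a a' : Fin d → LaurentSeries ℂ,
        (∀ i, ∀ n : ℤ, 0 ≤ n → (a i).coeff n = 0) →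
        (∀ i, ∀ n : ℤ, 0 ≤ n → (a' i).coeff n = 0) →
        ∀ n : ℤ, -1 ≤ n → (K a a').coeff n = 0) ↔
     (∀ b b' : Fin d → LaurentSeries ℂ,
        (∀ i, ∀ n : ℤ, n ≠ 0 → (b i).coeff n = 0) →
        (∀ i, ∀ n : ℤ, n ≠ 0 → (b' i).coeff n = 0) →
        ∀ n : ℤ, n ≠ 0 → (K b b').coeff n = 0)) :=
  ⟨OppositeFiltration.residueVanishesOnPrincipalParts_iff K hKl,
    OppositeFiltration.PairingVanishesFromNegOneOnPrincipalParts.pairingIsConstantOnConstants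
      K hKl hKr hH0,
    OppositeFiltration.PairingIsConstantOnConstants.pairingVanishesFromNegOneOnPrincipalParts
      K hKl hKr⟩
end

section
/- In the ring ℂ[[t]][z, z^{-1}] modulo the relation q/z^k ≡ 1/z^{k-2} − (k−1)t/z^{k-1} for all k ≥ 2 (coming from Q_f-exactness for f = z + q/z), every element q^m/z^m with m ≥ 1 is congruent to an element of the ℂ[[t]]-span of {1, q/z}. Concretely: the ℂ[[t]]-module ℂ[[t]][z,z^{-1}] modulo the ℂ[[t]]-submodule generated by {z^k·(z − q/z) : k ∈ ℤ} ∪ {z^{-k}(q/z^2 + t/z − 1) : k ≥ 0} is generated by the classes of 1 and q/z. -/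
open LaurentPolynomial

/-!
Expanding the relations, `z^{k+1}(z − q/z) = z^{k+2} − q z^k` lets one climb two steps at a
time from `1` and `z = (z − q/z) + q/z`, while `z^{-k}(q/z² + t/z − 1)` expresses `q z^{-k-2}`
through `z^{-k}` and `z^{-k-1}`; as `q` is a unit, this descends two steps at a time from `1`
and `1/z = q⁻¹ · q/z`. So every monomial, hence every Laurent polynomial, lies in the span.
-/

namespace LaurentPolynomial

variable {R : Type*} [CommRing R] {M : Submodule R R[T;T⁻¹]}

theorem submodule_eq_top_of_forall_T_mem (h : ∀ n, T n ∈ M) : M = ⊤ :=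
  eq_top_iff.mpr fun p _ => p.induction_on' (fun _ _ => M.add_mem) fun n a => by
    rw [← smul_eq_C_mul]
    exact M.smul_mem a (h n)

variable {q t : R}

theorem T_add_two_mem {k : ℤ} (hrel : T (k + 1) * (T 1 - C q * T (-1)) ∈ M)
    (hk : T k ∈ M) : T (k + 2) ∈ M := by
  have hexp : T (k + 1) * (T 1 - C q * T (-1)) = T (k + 2) - q • T k := by
    rw [smul_eq_C_mul, mul_sub, ← T_add, mul_left_comm, ← T_add]
    ring_nf
  rw [hexp] at hrel
  simpa only [sub_add_cancel] using M.add_mem hrel (M.smul_mem q hk)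

theorem T_sub_two_mem (hq : IsUnit q) {k : ℤ}
    (hrel : T k * (C q * T (-2) + C t * T (-1) - 1) ∈ M)
    (hk : T k ∈ M) (hk₁ : T (k - 1) ∈ M) : T (k - 2) ∈ M := by
  have hexp : T k * (C q * T (-2) + C t * T (-1) - 1) =
      q • T (k - 2) + t • T (k - 1) - T k := by
    rw [smul_eq_C_mul, smul_eq_C_mul, mul_sub, mul_add, mul_one, mul_left_comm,
      mul_left_comm (T k), ← T_add, ← T_add]
    ring_nf
  rw [← M.smul_mem_iff_of_isUnit hq]
  rw [hexp] at hrel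
  simpa only [sub_add_cancel, add_sub_cancel_right] using
    M.sub_mem (M.add_mem hrel hk) (M.smul_mem t hk₁)

theorem submodule_eq_top_of_relations_mem (hq : IsUnit q)
    (hup : ∀ k : ℤ, T k * (T 1 - C q * T (-1)) ∈ M)
    (hdown : ∀ k : ℕ, T (-(k : ℤ)) * (C q * T (-2) + C t * T (-1) - 1) ∈ M)
    (h₁ : 1 ∈ M) (hqz : C q * T (-1) ∈ M) : M = ⊤ := by
  have hT₀ : T 0 ∈ M := T_zero (R := R) ▸ h₁
  have hT₁ : T 1 ∈ M := by
    simpa only [T_zero, one_mul, sub_add_cancel] using M.add_mem (hup 0) hqz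
  have hTneg₁ : T (-1) ∈ M := by
    rwa [← M.smul_mem_iff_of_isUnit hq, smul_eq_C_mul]
  have hnat : ∀ n : ℕ, T n ∈ M := Nat.twoStepInduction hT₀ hT₁ fun n hn _ => by
    simpa using T_add_two_mem (by simpa using hup (n + 1)) hn
  have hneg : ∀ n : ℕ, T (-(n : ℤ)) ∈ M := Nat.twoStepInduction (by simpa using hT₀)
    (by simpa using hTneg₁) fun n hn hn₁ => by
      have := T_sub_two_mem hq (hdown n) hn (by simpa [sub_eq_add_neg, add_comm] using hn₁)
      simpa [sub_eq_add_neg, add_comm] using this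
  refine submodule_eq_top_of_forall_T_mem fun n => ?_
  obtain ⟨n, rfl | rfl⟩ := Int.eq_nat_or_neg n
  exacts [hnat n, hneg n]

end LaurentPolynomial

/-- For `f = z + q/z` (`q ≠ 0`), the `ℂ[[t]]`-module `ℂ[[t]][z,z⁻¹]` modulo the
`ℂ[[t]]`-submodule generated by the `Q_f`-exact relations
`{z^k(z − q/z) : k ∈ ℤ} ∪ {z^{-k}(q/z² + t/z − 1) : k ≥ 0}` is generated by the
classes of `1` and `q/z`. -/
theorem mirror_P1_brieskorn_lattice_generators (q : ℂ) (hq : q ≠ 0) :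
    let A := LaurentPolynomial (PowerSeries ℂ)
    let qc : A := C (PowerSeries.C q)
    let tc : A := C (PowerSeries.X)
    let N : Submodule (PowerSeries ℂ) A :=
      Submodule.span (PowerSeries ℂ)
        ({x | ∃ k : ℤ, x = T k * (T 1 - qc * T (-1))} ∪
         {x | ∃ k : ℕ, x = T (-(k : ℤ)) * (qc * T (-2) + tc * T (-1) - 1)})
    N ⊔ Submodule.span (PowerSeries ℂ) ({1, qc * T (-1)} : Set A) = ⊤ := by
  intro A qc tc N
  refine submodule_eq_top_of_relations_mem (t := PowerSeries.X)
    ((isUnit_iff_ne_zero.mpr hq).map PowerSeries.C)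
    (fun k => Submodule.mem_sup_left (Submodule.subset_span (Or.inl ⟨k, rfl⟩)))
    (fun k => Submodule.mem_sup_left (Submodule.subset_span (Or.inr ⟨k, rfl⟩)))
    (Submodule.mem_sup_right (Submodule.subset_span (Set.mem_insert _ _)))
    (Submodule.mem_sup_right (Submodule.subset_span (Set.mem_insert_of_mem _ rfl)))
end
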